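/- Fix a constant δ ∈ (0, 1/2). There exists a constant C = C(δ) > 0 such that the following holds. Consider a sequence of instances indexed by p → ∞ with k ≤ p^{1/2−δ}, k/σ² ≥ C, and n ≤ (1/2)·(1 − log log(p/k)/log(p/k))·n*. Then E_{S ~ Hyp(p,k,k)}[ (1 − S/(k + σ²))^{−n} ] = 1 + o(1) as p → ∞. -/

import Mathlib

open Filter Real

noncomputable section

/-- The pmf of the hypergeometric distribution `Hyp(p,k,k)` at `s`:
`ℙ(S = s) = C(k,s) C(p−k, k−s) / C(p,k)`. -/
def hypPMF (p k s : ℕ) : ℝ :=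
  (k.choose s * (p - k).choose (k - s) : ℝ) / p.choose k

/-- The critical sample size `n* = 2k log(p/k) / log(1 + k/σ²)`. -/
def nstar (p k : ℕ) (σ : ℝ) : ℝ :=
  2 * k * Real.log ((p : ℝ) / (k : ℝ)) / Real.log (1 + (k : ℝ) / σ ^ 2)

open Finset in
private lemma exp_interp {t y : ℝ} (h0 : 0 ≤ t) (h1 : t ≤ 1) :
    Real.exp (t * y) ≤ 1 - t + t * Real.exp y := by
  have h := convexOn_exp.2 (Set.mem_univ (0:ℝ)) (Set.mem_univ y)
    (by linarith : (0:ℝ) ≤ 1 - t) h0 (by ring)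
  simpa using h

open Finset in
private lemma sum_hypPMF (p k : ℕ) (hk : k ≤ p) :
    ∑ s ∈ Finset.range (k+1), hypPMF p k s = 1 := by
  have h0 : 0 < p.choose k := Nat.choose_pos hk
  have hv : ∑ s ∈ Finset.range (k+1), (k.choose s * (p-k).choose (k-s)) = p.choose k := by
    have := Nat.add_choose_eq k (p-k) k
    rw [Nat.add_sub_cancel' hk] at this
    rw [this, Finset.Nat.sum_antidiagonal_eq_sum_range_succ_mk]
  unfold hypPMF
  rw [← Finset.sum_div]
  rw [div_eq_one_iff_eq (by exact_mod_cast h0.ne')]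
  exact_mod_cast hv

private lemma choose_aux (p k : ℕ) (hp : 2*k ≤ p) :
    ∀ s, s ≤ k → (p-k).choose (k-s) * (p - 2*k + 1)^s ≤ p.choose k * k^s := by
  intro s
  induction s with
  | zero => intro _; simpa using Nat.choose_le_choose k (Nat.sub_le p k)
  | succ s ih =>
    intro hs
    have hsk : s ≤ k := le_of_lt (Nat.lt_of_succ_le hs)
    have step : (p-k).choose (k-(s+1)) * (p - 2*k + 1) ≤ (p-k).choose (k-s) * k := by
      set j := k - (s+1) with hj
      have hj1 : j + 1 = k - s := by omega
      have hid : (p-k).choose (j+1) * (j+1) = (p-k).choose j * ((p-k) - j) :=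
        Nat.choose_succ_right_eq _ _
      have key : (p - 2*k + 1) * (j+1) ≤ ((p-k) - j) * k := by
        have h1 : j + 1 ≤ k := by omega
        have h2 : p - 2*k + 1 ≤ (p-k) - j := by omega
        exact Nat.mul_le_mul h2 (by omega)
      have : ((p-k).choose j * (p - 2*k + 1)) * (j+1) ≤ ((p-k).choose (k-s) * k) * (j+1) := by
        calc ((p-k).choose j * (p - 2*k + 1)) * (j+1)
            = (p-k).choose j * ((p - 2*k + 1) * (j+1)) := by ring
          _ ≤ (p-k).choose j * (((p-k) - j) * k) := Nat.mul_le_mul_left _ key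
          _ = ((p-k).choose j * ((p-k) - j)) * k := by ring
          _ = ((p-k).choose (j+1) * (j+1)) * k := by rw [hid]
          _ = ((p-k).choose (k-s) * k) * (j+1) := by rw [hj1]; ring
      exact Nat.le_of_mul_le_mul_right this (by omega)
    calc (p-k).choose (k-(s+1)) * (p - 2*k + 1)^(s+1)
        = ((p-k).choose (k-(s+1)) * (p - 2*k + 1)) * (p - 2*k + 1)^s := by ring
      _ ≤ ((p-k).choose (k-s) * k) * (p - 2*k + 1)^s := Nat.mul_le_mul_right _ step
      _ = ((p-k).choose (k-s) * (p - 2*k + 1)^s) * k := by ring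
      _ ≤ (p.choose k * k^s) * k := Nat.mul_le_mul_right _ (ih hsk)
      _ = p.choose k * k^(s+1) := by ring

private lemma hypPMF_le (p k s : ℕ) (hp : 2*k ≤ p) (hs : s ≤ k) :
    hypPMF p k s ≤ (k.choose s : ℝ) * ((k : ℝ) / ((p:ℝ) - 2*k + 1))^s := by
  have hk : k ≤ p := by omega
  have hC : (0:ℝ) < p.choose k := by exact_mod_cast Nat.choose_pos hk
  have hQ : (0:ℝ) < (p:ℝ) - 2*k + 1 := by
    have : (2*k : ℝ) ≤ p := by exact_mod_cast hp
    linarith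
  have hcast : ((p - 2*k + 1 : ℕ) : ℝ) = (p:ℝ) - 2*k + 1 := by
    push_cast [Nat.cast_sub hp]; ring
  have hr : ((p-k).choose (k-s) : ℝ) * ((p:ℝ) - 2*k + 1)^s ≤ (p.choose k : ℝ) * (k:ℝ)^s := by
    rw [← hcast]; exact_mod_cast choose_aux p k hp s hs
  unfold hypPMF
  rw [div_le_iff₀ hC]
  have key : (↑(k.choose s) * ↑((p-k).choose (k-s))) * (((p:ℝ) - 2*↑k + 1)^s) ≤
      (↑(k.choose s) * ((k:ℝ)/((p:ℝ)-2*↑k+1))^s * ↑(p.choose k)) * (((p:ℝ)-2*↑k+1)^s) := by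
    have e : (↑(k.choose s) * ((k:ℝ)/((p:ℝ)-2*↑k+1))^s * ↑(p.choose k)) * (((p:ℝ)-2*↑k+1)^s)
        = ↑(k.choose s) * (↑(p.choose k) * (k:ℝ)^s) := by
      rw [div_pow]; field_simp
    rw [e, mul_assoc]
    exact mul_le_mul_of_nonneg_left hr (by positivity)
  exact le_of_mul_le_mul_right key (pow_pos hQ s)
set_option maxHeartbeats 1000000 in
open Finset in
private lemma term_bound (p k n s : ℕ) (σ δ : ℝ) (hσ : 0 < σ) (hδ : 0 < δ)
    (hk1 : 1 ≤ k) (hs1 : 1 ≤ s) (hsk : s ≤ k) (hkp : 4*k ≤ p)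
    (hC : Real.exp (4/δ) ≤ (k:ℝ)/σ^2)
    (hlog : 1 ≤ Real.log ((p:ℝ)/(k:ℝ)))
    (hk2 : (k:ℝ)^2 ≤ (p:ℝ)^((1:ℝ) - 2*δ))
    (hnL : (n:ℝ) * Real.log (1 + (k:ℝ)/σ^2) ≤
      (1 - Real.log (Real.log ((p:ℝ)/(k:ℝ))) / Real.log ((p:ℝ)/(k:ℝ))) * k *
        Real.log ((p:ℝ)/(k:ℝ))) :
    hypPMF p k s * (1 - (s:ℝ)/((k:ℝ)+σ^2)) ^ (-(n:ℤ)) ≤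
      (2*(p:ℝ)^(-(3*δ/2)) + 8/Real.log ((p:ℝ)/(k:ℝ)))^s := by
  set P := (p:ℝ) with hPdef
  set K := (k:ℝ) with hKdef
  set A := K + σ^2 with hAdef
  set lg := Real.log (P/K) with hlgdef
  set L := Real.log (1 + K/σ^2) with hLdef
  have hK1 : (1:ℝ) ≤ K := by rw [hKdef]; exact_mod_cast hk1
  have hK0 : (0:ℝ) < K := by linarith
  have hsK : (s:ℝ) ≤ K := by rw [hKdef]; exact_mod_cast hsk
  have hs0 : (0:ℝ) ≤ (s:ℝ) := Nat.cast_nonneg s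
  have hP4K : 4*K ≤ P := by rw [hKdef, hPdef]; exact_mod_cast hkp
  have hP0 : (0:ℝ) < P := by linarith
  have hA0 : (0:ℝ) < A := by positivity
  have hb0 : (0:ℝ) < 1 - (s:ℝ)/A := by
    rw [sub_pos, div_lt_one hA0, hAdef]
    linarith only [hsK, pow_pos hσ 2]
  have hL4 : 4/δ ≤ L := by
    calc 4/δ = Real.log (Real.exp (4/δ)) := (Real.log_exp _).symm
      _ ≤ L := by
          apply Real.log_le_log (Real.exp_pos _)
          have : (0:ℝ) ≤ K/σ^2 := by positivity
          linarith
  have hL0 : (0:ℝ) < L := lt_of_lt_of_le (by positivity) hL4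
  have hlg0 : (0:ℝ) < lg := lt_of_lt_of_le one_pos hlog
  have hllg0 : 0 ≤ Real.log lg := Real.log_nonneg hlog
  have hllg1 : Real.log lg ≤ lg := Real.log_le_self hlg0.le
  set η := Real.log lg / lg with hηdef
  have hη0 : 0 ≤ η := by positivity
  have hη1 : η ≤ 1 := by rw [hηdef, div_le_one hlg0]; exact hllg1
  have hQ2 : P/2 ≤ P - 2*K + 1 := by linarith
  have hQ0 : (0:ℝ) < P - 2*K + 1 := by linarith
  have hpmf_le := hypPMF_le p k s (by omega) hsk
  rw [← hKdef, ← hPdef] at hpmf_le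
  clear_value P K A lg L η
  have hw0 : (0:ℝ) ≤ 2*P^(-(3*δ/2)) := by positivity
  have hw0' : (0:ℝ) ≤ 8/lg := by positivity
  -- factor helper
  have factor_le : ∀ c : ℝ, Real.exp (-c) ≤ 1 - (s:ℝ)/A →
      (1 - (s:ℝ)/A) ^ (-(n:ℤ)) ≤ Real.exp (c*n) := by
    intro c hc
    rw [zpow_neg, zpow_natCast]
    have h1 : Real.exp (-c) ^ n ≤ (1 - (s:ℝ)/A)^n :=
      pow_le_pow_left₀ (Real.exp_pos _).le hc n
    have h2 : (0:ℝ) < Real.exp (-c) ^ n := pow_pos (Real.exp_pos _) n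
    calc ((1 - (s:ℝ)/A)^n)⁻¹ ≤ (Real.exp (-c) ^ n)⁻¹ := by
          apply inv_anti₀ h2 h1
      _ = Real.exp (c*n) := by
          rw [← Real.exp_nat_mul, ← Real.exp_neg]
          ring_nf
  have hpmf0 : 0 ≤ hypPMF p k s := by unfold hypPMF; positivity
  by_cases hcase : 2*s ≤ k
  · -- small s
    have hx1 : 2*((s:ℝ)/A) ≤ 1 := by
      have h2s : (2*s:ℝ) ≤ K := by rw [hKdef]; exact_mod_cast hcase
      rw [mul_div_assoc', div_le_one hA0, hAdef]
      linarith only [h2s, pow_pos hσ 2]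
    have hx0 : 0 ≤ (s:ℝ)/A := by positivity
    have hexp2 : Real.exp 1 ≥ 2 := by
      have := Real.add_one_le_exp (1:ℝ); linarith
    have he : Real.exp (-1:ℝ) ≤ 1/2 := by
      rw [Real.exp_neg]
      rw [inv_le_comm₀ (Real.exp_pos 1) (by norm_num)]
      linarith
    have hbA : Real.exp (-(2*((s:ℝ)/A))) ≤ 1 - (s:ℝ)/A := by
      have h := exp_interp (t := 2*((s:ℝ)/A)) (y := (-1:ℝ)) (by positivity) hx1
      have e1 : 2*((s:ℝ)/A) * (-1:ℝ) = -(2*((s:ℝ)/A)) := by ring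
      rw [e1] at h
      have h5 : 2*((s:ℝ)/A)*Real.exp (-1:ℝ) ≤ 2*((s:ℝ)/A)*(1/2) :=
        mul_le_mul_of_nonneg_left he (by positivity)
      linarith
    have hfac := factor_le _ hbA
    -- exponent bound
    have hn4 : 4*(n:ℝ) ≤ δ*K*lg := by
      have h1 : (n:ℝ)*L ≤ K*lg := by
        have h2 : (1-η)*K*lg ≤ K*lg := by
          have h9 := mul_nonneg (mul_nonneg hη0 hK0.le) hlg0.le
          linarith only [h9]
        linarith
      have h3 : (n:ℝ)*(4/δ) ≤ (n:ℝ)*L := by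
        apply mul_le_mul_of_nonneg_left hL4 (Nat.cast_nonneg n)
      have h4 : (n:ℝ)*(4/δ) ≤ K*lg := le_trans h3 h1
      calc 4*(n:ℝ) = ((n:ℝ)*(4/δ))*δ := by field_simp
        _ ≤ (K*lg)*δ := by apply mul_le_mul_of_nonneg_right h4 hδ.le
        _ = δ*K*lg := by ring
    have harg : 2*((s:ℝ)/A)*n ≤ (s:ℝ)*((δ/2)*lg) := by
      have hKA : K ≤ A := by rw [hAdef]; linarith only [pow_pos hσ 2]
      rw [show 2*((s:ℝ)/A)*n = (2*(s:ℝ)*n)/A by ring, div_le_iff₀ hA0]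
      have hm1 : (s:ℝ)*(4*(n:ℝ)) ≤ (s:ℝ)*(δ*K*lg) := mul_le_mul_of_nonneg_left hn4 hs0
      have hm2 : (0:ℝ) ≤ (s:ℝ)*((δ/2)*lg)*(A-K) := by
        apply mul_nonneg (by positivity)
        linarith
      linarith only [hm1, hm2, hKA, mul_le_mul_of_nonneg_left hKA (by positivity : (0:ℝ) ≤ (s:ℝ)*((δ/2)*lg))]
    have hfac2 : (1 - (s:ℝ)/A) ^ (-(n:ℤ)) ≤ (Real.exp ((δ/2)*lg))^s := by
      calc (1 - (s:ℝ)/A) ^ (-(n:ℤ)) ≤ Real.exp (2*((s:ℝ)/A)*n) := hfac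
        _ ≤ Real.exp ((s:ℝ)*((δ/2)*lg)) := Real.exp_le_exp.mpr harg
        _ = (Real.exp ((δ/2)*lg))^s := by rw [← Real.exp_nat_mul]
    have hbase : Real.exp ((δ/2)*lg) ≤ P^(δ/2) := by
      have h1 : lg ≤ Real.log P := by
        rw [hlgdef]
        apply Real.log_le_log (by positivity)
        rw [div_le_iff₀ hK0]
        linarith only [mul_le_mul_of_nonneg_left hK1 hP0.le]
      calc Real.exp ((δ/2)*lg) ≤ Real.exp ((δ/2)*Real.log P) := by
            apply Real.exp_le_exp.mpr
            have h8 := mul_le_mul_of_nonneg_left h1 (by positivity : (0:ℝ) ≤ δ/2)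
            linarith only [h8]
        _ = P^(δ/2) := by rw [Real.rpow_def_of_pos hP0]; ring_nf
    have hch : (k.choose s : ℝ) ≤ K^s := by
      rw [hKdef, ← Nat.cast_pow]; exact_mod_cast Nat.choose_le_pow k s
    have hterm : hypPMF p k s * (1 - (s:ℝ)/A) ^ (-(n:ℤ)) ≤
        (K^s * (K/(P-2*K+1))^s) * (P^(δ/2))^s := by
      apply mul_le_mul
      · exact le_trans hpmf_le (by
          apply mul_le_mul_of_nonneg_right hch (by positivity))
      · exact le_trans hfac2 (pow_le_pow_left₀ (Real.exp_pos _).le hbase s)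
      · positivity
      · positivity
    calc hypPMF p k s * (1 - (s:ℝ)/A) ^ (-(n:ℤ))
        ≤ (K^s * (K/(P-2*K+1))^s) * (P^(δ/2))^s := hterm
      _ = (K*(K/(P-2*K+1))*P^(δ/2))^s := by rw [mul_pow, mul_pow]
      _ ≤ (2*P^(-(3*δ/2)) + 8/lg)^s := by
          apply pow_le_pow_left₀ (by positivity)
          have e1 : P^((1:ℝ)-2*δ) = P * P^(-(2*δ)) := by
            rw [show (1:ℝ)-2*δ = 1 + (-(2*δ)) by ring, Real.rpow_add hP0, Real.rpow_one]
          have hKQ : K*(K/(P-2*K+1)) ≤ 2*P^(-(2*δ)) := by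
            rw [mul_div_assoc', div_le_iff₀ hQ0]
            have h2 : K*K ≤ P * P^(-(2*δ)) := by
              rw [← e1]
              calc K*K = K^2 := by ring
                _ ≤ P^((1:ℝ)-2*δ) := hk2
            have h3 : (0:ℝ) ≤ P^(-(2*δ)) := by positivity
            have h5 := mul_le_mul_of_nonneg_left hQ2 h3
            linarith only [h2, h5]
          have e2 : 2*P^(-(2*δ)) * P^(δ/2) = 2*P^(-(3*δ/2)) := by
            rw [mul_assoc, ← Real.rpow_add hP0]
            norm_num
            ring_nf
          have h4 : K*(K/(P-2*K+1))*P^(δ/2) ≤ 2*P^(-(2*δ)) * P^(δ/2) := by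
            apply mul_le_mul_of_nonneg_right hKQ (by positivity)
          rw [e2] at h4
          linarith [h4, hw0']
  · -- large s : k < 2*s
    have hk2s : K ≤ 2*(s:ℝ) := by
      rw [hKdef]
      have : k ≤ 2*s := by omega
      exact_mod_cast this
    have ht0 : 0 ≤ (s:ℝ)/K := by positivity
    have ht1 : (s:ℝ)/K ≤ 1 := by rw [div_le_one hK0]; exact hsK
    have heL : Real.exp (-L) = σ^2/A := by
      rw [hLdef, ← Real.log_inv, Real.exp_log (by positivity)]
      rw [hAdef]; field_simp; ring
    have hbB : Real.exp (-(((s:ℝ)/K)*L)) ≤ 1 - (s:ℝ)/A := by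
      have h := exp_interp (t := (s:ℝ)/K) (y := -L) ht0 ht1
      rw [heL] at h
      have e1 : ((s:ℝ)/K) * (-L) = -(((s:ℝ)/K)*L) := by ring
      rw [e1] at h
      have e2 : 1 - (s:ℝ)/K + (s:ℝ)/K * (σ^2/A) = 1 - (s:ℝ)/A := by
        rw [hAdef]; field_simp; ring
      linarith [h, e2.le, e2.ge]
    have hfac := factor_le _ hbB
    have harg : ((s:ℝ)/K)*L*n ≤ (s:ℝ)*((1-η)*lg) := by
      have h1 : ((s:ℝ)/K)*((n:ℝ)*L) ≤ ((s:ℝ)/K)*((1-η)*K*lg) :=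
        mul_le_mul_of_nonneg_left hnL ht0
      have e1 : ((s:ℝ)/K)*((1-η)*K*lg) = (s:ℝ)*((1-η)*lg) := by
        field_simp
      rw [e1] at h1
      calc ((s:ℝ)/K)*L*n = ((s:ℝ)/K)*((n:ℝ)*L) := by ring
        _ ≤ (s:ℝ)*((1-η)*lg) := h1
    have hfac2 : (1 - (s:ℝ)/A) ^ (-(n:ℤ)) ≤ ((P/K)/lg)^s := by
      have e3 : (1-η)*lg = lg - Real.log lg := by
        rw [hηdef]; field_simp
      have e4 : Real.exp (lg - Real.log lg) = (P/K)/lg := by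
        rw [Real.exp_sub, Real.exp_log hlg0, hlgdef, Real.exp_log (by positivity)]
      calc (1 - (s:ℝ)/A) ^ (-(n:ℤ)) ≤ Real.exp (((s:ℝ)/K)*L*n) := hfac
        _ ≤ Real.exp ((s:ℝ)*((1-η)*lg)) := Real.exp_le_exp.mpr harg
        _ = (Real.exp ((1-η)*lg))^s := by rw [← Real.exp_nat_mul]
        _ = ((P/K)/lg)^s := by rw [e3, e4]
    have hch : (k.choose s : ℝ) ≤ 4^s := by
      have h1 : k.choose s ≤ 2^k := by
        calc k.choose s ≤ ∑ i ∈ Finset.range (k+1), k.choose i :=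
              Finset.single_le_sum (fun i _ => Nat.zero_le _)
                (Finset.mem_range.mpr (by omega))
          _ = 2^k := Nat.sum_range_choose k
      have h2 : (2:ℕ)^k ≤ 2^(2*s) := Nat.pow_le_pow_right (by norm_num) (by omega)
      have h3 : (2:ℕ)^(2*s) = 4^s := by rw [pow_mul]; norm_num
      have : k.choose s ≤ 4^s := le_trans h1 (h3 ▸ h2)
      exact_mod_cast this
    have hterm : hypPMF p k s * (1 - (s:ℝ)/A) ^ (-(n:ℤ)) ≤
        ((4:ℝ)^s * (K/(P-2*K+1))^s) * ((P/K)/lg)^s := by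
      apply mul_le_mul
      · exact le_trans hpmf_le (mul_le_mul_of_nonneg_right hch (by positivity))
      · exact hfac2
      · exact le_trans (by positivity : (0:ℝ) ≤ 0) (le_of_eq rfl) |>.trans
          (zpow_nonneg hb0.le _)
      · positivity
    calc hypPMF p k s * (1 - (s:ℝ)/A) ^ (-(n:ℤ))
        ≤ ((4:ℝ)^s * (K/(P-2*K+1))^s) * ((P/K)/lg)^s := hterm
      _ = (4*(K/(P-2*K+1))*((P/K)/lg))^s := by rw [mul_pow, mul_pow]
      _ ≤ (2*P^(-(3*δ/2)) + 8/lg)^s := by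
          apply pow_le_pow_left₀ (by positivity)
          have e5 : 4*(K/(P-2*K+1))*((P/K)/lg) = (4*P/(P-2*K+1))/lg := by
            field_simp
          have h6 : 4*P/(P-2*K+1) ≤ 8 := by
            rw [div_le_iff₀ hQ0]; linarith
          have h7 : (4*P/(P-2*K+1))/lg ≤ 8/lg :=
            div_le_div_of_nonneg_right h6 hlg0.le |>.trans (le_of_eq rfl)
          rw [e5]
          linarith [hw0]
set_option maxHeartbeats 1000000 in
/-- Lemma `lmm:MGF_boundMain`: fix `δ ∈ (0,1/2)`. There is `C = C(δ) > 0`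
such that along any sequence of instances indexed by `p → ∞` with `k ≤ p^{1/2−δ}`,
`k/σ² ≥ C` and `n ≤ (1/2)(1 − log log(p/k)/log(p/k)) n*`,
`E_{S~Hyp(p,k,k)}[(1 − S/(k+σ²))^{−n}] = 1 + o(1)`. -/
theorem hyp_moment_total
    (δ : ℝ) (hδ1 : 0 < δ) (hδ2 : δ < 1 / 2) :
    ∃ C > 0, ∀ (k n : ℕ → ℕ) (σ : ℕ → ℝ),
      (∀ᶠ p : ℕ in atTop, 0 < σ p) →
      (∀ᶠ p : ℕ in atTop, (k p : ℝ) ≤ (p : ℝ) ^ ((1 : ℝ) / 2 - δ)) →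
      (∀ᶠ p : ℕ in atTop, C ≤ (k p : ℝ) / σ p ^ 2) →
      (∀ᶠ p : ℕ in atTop, (n p : ℝ) ≤
        1 / 2 * (1 - Real.log (Real.log ((p : ℝ) / (k p : ℝ))) /
            Real.log ((p : ℝ) / (k p : ℝ))) * nstar p (k p) (σ p)) →
      Tendsto (fun p : ℕ =>
          ∑ s ∈ Finset.range (k p + 1),
            hypPMF p (k p) s * (1 - (s : ℝ) / ((k p : ℝ) + σ p ^ 2)) ^ (-(n p : ℤ)))
        atTop (nhds 1) := by
  refine ⟨Real.exp (4/δ), Real.exp_pos _, ?_⟩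
  intro k n σ hσ hk hC hn
  set W : ℕ → ℝ := fun p => 2*(p:ℝ)^(-(3*δ/2)) + 16/Real.log p with hWdef
  have hW0 : Tendsto W atTop (nhds 0) := by
    have h1 : Tendsto (fun p:ℕ => 2*(p:ℝ)^(-(3*δ/2))) atTop (nhds 0) := by
      have h := (tendsto_rpow_neg_atTop (by positivity : 0 < 3*δ/2)).comp
        (tendsto_natCast_atTop_atTop (R := ℝ))
      simpa using h.const_mul 2
    have h2 : Tendsto (fun p:ℕ => 16/Real.log p) atTop (nhds 0) := by
      have hlog : Tendsto (fun p:ℕ => Real.log p) atTop atTop :=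
        Real.tendsto_log_atTop.comp (tendsto_natCast_atTop_atTop (R := ℝ))
      exact Tendsto.div_atTop tendsto_const_nhds hlog
    simpa using h1.add h2
  set T : ℕ → ℝ := fun p => ∑ s ∈ Finset.range (k p + 1),
      hypPMF p (k p) s * (1 - (s : ℝ) / ((k p : ℝ) + σ p ^ 2)) ^ (-(n p : ℤ)) with hTdef
  have hWhalf : ∀ᶠ p : ℕ in atTop, W p ≤ 1/2 :=
    hW0.eventually_le_const (by norm_num : (0:ℝ) < 1/2)
  have key : ∀ᶠ p : ℕ in atTop, 1 ≤ T p ∧ T p ≤ 1 + 2 * W p := by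
    filter_upwards [hσ, hk, hC, hn, eventually_ge_atTop 16, hWhalf] with p hσp hkp hCp hnp hp16 hWp
    have hP16 : (16:ℝ) ≤ (p:ℝ) := by exact_mod_cast hp16
    have hP0 : (0:ℝ) < p := by linarith
    have hP1 : (1:ℝ) ≤ p := by linarith
    have hk1 : 1 ≤ k p := by
      rcases Nat.eq_zero_or_pos (k p) with h0 | h1
      · exfalso
        rw [h0] at hCp
        simp at hCp
        nlinarith [Real.exp_pos (4/δ), hCp, pow_pos hσp 2]
      · exact h1
    have hK0 : (0:ℝ) < (k p : ℝ) := by exact_mod_cast hk1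
    have hK1 : (1:ℝ) ≤ (k p : ℝ) := by exact_mod_cast hk1
    -- 4 k ≤ p
    have hu4 : (4:ℝ) ≤ (p:ℝ)^((1:ℝ)/2) := by
      have h1 : ((16:ℝ))^((1:ℝ)/2) ≤ (p:ℝ)^((1:ℝ)/2) :=
        Real.rpow_le_rpow (by norm_num) hP16 (by norm_num)
      have h2 : ((16:ℝ))^((1:ℝ)/2) = 4 := by
        rw [show (16:ℝ) = 4^(2:ℕ) by norm_num, ← Real.rpow_natCast 4 2,
          ← Real.rpow_mul (by norm_num)]
        norm_num
      linarith
    have husq : (p:ℝ)^((1:ℝ)/2) * (p:ℝ)^((1:ℝ)/2) = p := by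
      rw [← Real.rpow_add hP0]; norm_num
    have hKu : (k p : ℝ) ≤ (p:ℝ)^((1:ℝ)/2) := by
      calc (k p : ℝ) ≤ (p:ℝ)^((1:ℝ)/2 - δ) := hkp
        _ ≤ (p:ℝ)^((1:ℝ)/2) := Real.rpow_le_rpow_of_exponent_le hP1 (by linarith)
    have hkp4 : 4 * k p ≤ p := by
      have h3 : 4*(k p : ℝ) ≤ (p:ℝ) := by
        have h4 := mul_le_mul_of_nonneg_left hu4 (by positivity : (0:ℝ) ≤ (p:ℝ)^((1:ℝ)/2))
        nlinarith [hKu, hu4]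
      exact_mod_cast h3
    have hQ : k p ≤ p := by omega
    -- log bounds
    have hlogP : (2:ℝ) ≤ Real.log p := by
      have h1 : Real.log 16 ≤ Real.log p := Real.log_le_log (by norm_num) hP16
      have h2 : Real.log (16:ℝ) = 4 * Real.log 2 := by
        rw [show (16:ℝ) = 2^(4:ℕ) by norm_num, Real.log_pow]; push_cast; ring
      nlinarith [Real.log_two_gt_d9]
    have hlogK : Real.log (k p : ℝ) ≤ ((1:ℝ)/2 - δ) * Real.log p := by
      calc Real.log (k p : ℝ) ≤ Real.log ((p:ℝ)^((1:ℝ)/2 - δ)) :=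
            Real.log_le_log hK0 hkp
        _ = ((1:ℝ)/2 - δ) * Real.log p := Real.log_rpow hP0 _
    have hlgeq : Real.log ((p:ℝ)/(k p:ℝ)) = Real.log p - Real.log (k p:ℝ) :=
      Real.log_div hP0.ne' hK0.ne'
    have hlog1 : 1 ≤ Real.log ((p:ℝ)/(k p:ℝ)) := by
      rw [hlgeq]; nlinarith [hlogP, hlogK, hδ1]
    have hlghalf : Real.log p / 2 ≤ Real.log ((p:ℝ)/(k p:ℝ)) := by
      rw [hlgeq]; nlinarith [hlogP, hlogK, hδ1]
    have hlg0 : (0:ℝ) < Real.log ((p:ℝ)/(k p:ℝ)) := by linarith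
    have h816 : 8/Real.log ((p:ℝ)/(k p:ℝ)) ≤ 16/Real.log p := by
      rw [div_le_div_iff₀ hlg0 (by linarith)]
      nlinarith [hlghalf, hlg0]
    -- k^2 bound
    have hk2 : (k p:ℝ)^2 ≤ (p:ℝ)^((1:ℝ) - 2*δ) := by
      have h1 : ((p:ℝ)^((1:ℝ)/2 - δ))^2 = (p:ℝ)^((1:ℝ) - 2*δ) := by
        rw [← Real.rpow_natCast ((p:ℝ)^((1:ℝ)/2 - δ)) 2, ← Real.rpow_mul hP0.le]
        norm_num; ring_nf
      calc (k p:ℝ)^2 ≤ ((p:ℝ)^((1:ℝ)/2 - δ))^2 := by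
            apply pow_le_pow_left₀ hK0.le hkp
        _ = (p:ℝ)^((1:ℝ) - 2*δ) := h1
    -- n L bound
    have hL4 : 4/δ ≤ Real.log (1 + (k p:ℝ)/σ p^2) := by
      calc 4/δ = Real.log (Real.exp (4/δ)) := (Real.log_exp _).symm
        _ ≤ _ := by
            apply Real.log_le_log (Real.exp_pos _)
            have : (0:ℝ) ≤ (k p:ℝ)/σ p^2 := by positivity
            linarith [hCp]
    have hL0 : (0:ℝ) < Real.log (1 + (k p:ℝ)/σ p^2) := lt_of_lt_of_le (by positivity) hL4
    have hnL : (n p:ℝ) * Real.log (1 + (k p:ℝ)/σ p^2) ≤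
        (1 - Real.log (Real.log ((p:ℝ)/(k p:ℝ))) / Real.log ((p:ℝ)/(k p:ℝ))) * (k p) *
          Real.log ((p:ℝ)/(k p:ℝ)) := by
      have e1 : 1/2 * (1 - Real.log (Real.log ((p:ℝ)/(k p:ℝ))) / Real.log ((p:ℝ)/(k p:ℝ))) *
          nstar p (k p) (σ p) =
          ((1 - Real.log (Real.log ((p:ℝ)/(k p:ℝ))) / Real.log ((p:ℝ)/(k p:ℝ))) * (k p) *
            Real.log ((p:ℝ)/(k p:ℝ))) / Real.log (1 + (k p:ℝ)/σ p^2) := by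
        unfold nstar; ring
      rw [e1] at hnp
      exact (le_div_iff₀ hL0).mp hnp
    -- bounds on terms
    have hsum1 := sum_hypPMF p (k p) hQ
    have hb : ∀ s ∈ Finset.range (k p + 1),
        0 < 1 - (s:ℝ)/((k p:ℝ) + σ p^2) ∧ 1 - (s:ℝ)/((k p:ℝ) + σ p^2) ≤ 1 := by
      intro s hs
      have hsk : (s:ℝ) ≤ (k p:ℝ) := by
        have := Finset.mem_range.mp hs; exact_mod_cast (by omega : s ≤ k p)
      have hA0 : (0:ℝ) < (k p:ℝ) + σ p^2 := by positivity
      constructor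
      · rw [sub_pos, div_lt_one hA0]; nlinarith [pow_pos hσp 2]
      · have : (0:ℝ) ≤ (s:ℝ)/((k p:ℝ) + σ p^2) := by positivity
        linarith
    have hfac1 : ∀ s ∈ Finset.range (k p + 1),
        1 ≤ (1 - (s:ℝ)/((k p:ℝ) + σ p^2)) ^ (-(n p:ℤ)) := by
      intro s hs
      obtain ⟨hb0, hb1⟩ := hb s hs
      rw [zpow_neg, zpow_natCast, one_le_inv_iff₀]
      exact ⟨pow_pos hb0 _, pow_le_one₀ hb0.le hb1⟩
    constructor
    · -- lower bound
      rw [hTdef]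
      calc (1:ℝ) = ∑ s ∈ Finset.range (k p + 1), hypPMF p (k p) s := hsum1.symm
        _ ≤ _ := by
            apply Finset.sum_le_sum
            intro s hs
            have hpmf0 : 0 ≤ hypPMF p (k p) s := by unfold hypPMF; positivity
            exact le_mul_of_one_le_right hpmf0 (hfac1 s hs)
    · -- upper bound
      have hW0p : (0:ℝ) ≤ W p := by
        rw [hWdef]
        have : (0:ℝ) ≤ 16/Real.log p := by positivity
        positivity
      have hterm : ∀ i ∈ Finset.range (k p),
          hypPMF p (k p) (i+1) * (1 - ((i+1:ℕ):ℝ)/((k p:ℝ) + σ p^2)) ^ (-(n p:ℤ)) ≤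
            (W p)^(i+1) := by
        intro i hi
        have hik : i + 1 ≤ k p := Finset.mem_range.mp hi
        have h1 := term_bound p (k p) (n p) (i+1) (σ p) δ hσp hδ1 hk1 (by omega) hik hkp4
          hCp hlog1 hk2 hnL
        calc hypPMF p (k p) (i+1) * (1 - ((i+1:ℕ):ℝ)/((k p:ℝ) + σ p^2)) ^ (-(n p:ℤ))
            ≤ (2*(p:ℝ)^(-(3*δ/2)) + 8/Real.log ((p:ℝ)/(k p:ℝ)))^(i+1) := h1
          _ ≤ (W p)^(i+1) := by
              apply pow_le_pow_left₀ (by positivity)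
              have hWp' : W p = 2*(p:ℝ)^(-(3*δ/2)) + 16/Real.log p := by simp [hWdef]
              rw [hWp']
              linarith [h816]
      have hpmf00 : hypPMF p (k p) 0 ≤ 1 := by
        rw [← hsum1]
        apply Finset.single_le_sum (f := fun s => hypPMF p (k p) s)
          (fun i _ => by unfold hypPMF; positivity) (Finset.mem_range.mpr (by omega))
      have hsplit : T p = (∑ i ∈ Finset.range (k p),
          hypPMF p (k p) (i+1) * (1 - ((i+1:ℕ):ℝ)/((k p:ℝ) + σ p^2)) ^ (-(n p:ℤ))) +
          hypPMF p (k p) 0 * (1 - ((0:ℕ):ℝ)/((k p:ℝ) + σ p^2)) ^ (-(n p:ℤ)) := by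
        rw [hTdef]
        exact Finset.sum_range_succ' _ (k p)
      have hzero : hypPMF p (k p) 0 * (1 - ((0:ℕ):ℝ)/((k p:ℝ) + σ p^2)) ^ (-(n p:ℤ)) =
          hypPMF p (k p) 0 := by
        norm_num
      have hgeo : ∑ i ∈ Finset.range (k p), (W p)^(i+1) ≤ 2 * W p := by
        have h1 : ∀ i ∈ Finset.range (k p), (W p)^(i+1) ≤ W p * (1/2:ℝ)^i := by
          intro i hi
          rw [pow_succ']
          apply mul_le_mul_of_nonneg_left _ hW0p
          calc (W p)^i ≤ (1/2:ℝ)^i := pow_le_pow_left₀ hW0p hWp i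
            _ = (1/2:ℝ)^i := rfl
        calc ∑ i ∈ Finset.range (k p), (W p)^(i+1)
            ≤ ∑ i ∈ Finset.range (k p), W p * (1/2:ℝ)^i := Finset.sum_le_sum h1
          _ = W p * ∑ i ∈ Finset.range (k p), (1/2:ℝ)^i := by rw [Finset.mul_sum]
          _ ≤ W p * 2 := mul_le_mul_of_nonneg_left (sum_geometric_two_le _) hW0p
          _ = 2 * W p := by ring
      calc T p = _ := hsplit
        _ ≤ 2 * W p + 1 := by
            rw [hzero]
            have h2 := Finset.sum_le_sum hterm
            have h3 := h2.trans hgeo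
            exact add_le_add h3 hpmf00
        _ = 1 + 2 * W p := by ring
  have hlow : ∀ᶠ p : ℕ in atTop, (1:ℝ) ≤ T p := key.mono (fun p h => h.1)
  have hupp : ∀ᶠ p : ℕ in atTop, T p ≤ 1 + 2 * W p := key.mono (fun p h => h.2)
  have hlim : Tendsto (fun p : ℕ => 1 + 2 * W p) atTop (nhds 1) := by
    have := (hW0.const_mul 2).const_add 1
    simpa using this
  exact tendsto_of_tendsto_of_tendsto_of_le_of_le' tendsto_const_nhds hlim hlow hupp

end
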